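/- Let u : ℝ → ℝ be three times continuously differentiable on [0,1] with u(0) = 0, u(1) = 0, and u'(1) = 0. Then for every s ∈ [0,1], both of the following hold: (i) ∫_0^1 (1/2)(s−1)²θ²·u'''(θ) dθ − ∫_s^1 (1/2)(s−θ)²·u'''(θ) dθ = u(s); (ii) ∫_0^1 (s−1)θ²·u'''(θ) dθ − ∫_s^1 (s−θ)·u'''(θ) dθ = u'(s). -/

import Mathlib

/-! Both identities are Taylor's formula with integral remainder, expanded at `1` and evaluated
at `s`. Since `u 1 = u' 1 = 0`, only the `u'' 1` coefficient survives, and the same formula at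
`s = 0`, together with `u 0 = 0`, identifies `u'' 1` with the moment `∫₀¹ θ² u'''`. -/

open MeasureTheory Set

theorem integral_eq_sub_of_hasDerivWithinAt_Icc {E : Type*} [NormedAddCommGroup E]
    [NormedSpace ℝ E] [CompleteSpace E] {F f : ℝ → E} {a b : ℝ} (hab : a ≤ b)
    (hF : ∀ x ∈ Icc a b, HasDerivWithinAt F (f x) (Icc a b) x)
    (hf : IntervalIntegrable f volume a b) :
    ∫ x in a..b, f x = F b - F a :=
  intervalIntegral.integral_eq_sub_of_hasDeriv_right_of_le hab
    (fun x hx => (hF x hx).continuousWithinAt)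
    (fun x hx => ((hF x (Ioo_subset_Icc_self hx)).hasDerivAt
      (Icc_mem_nhds hx.1 hx.2)).hasDerivWithinAt) hf

section Taylor

variable {a b : ℝ} {f f' f'' f''' : ℝ → ℝ}

theorem integral_sub_mul_eq_taylor_one (hab : a ≤ b)
    (hf : ∀ x ∈ Icc a b, HasDerivWithinAt f (f' x) (Icc a b) x)
    (hf' : ∀ x ∈ Icc a b, HasDerivWithinAt f' (f'' x) (Icc a b) x)
    (hf'' : IntervalIntegrable f'' volume a b) :
    ∫ θ in a..b, (a - θ) * f'' θ = (a - b) * f' b + f b - f a := by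
  have hint : IntervalIntegrable (fun θ => (a - θ) * f'' θ) volume a b :=
    hf''.continuousOn_mul (by fun_prop)
  rw [integral_eq_sub_of_hasDerivWithinAt_Icc (F := fun θ => (a - θ) * f' θ + f θ) hab _ hint]
  · ring
  intro x hx
  have hlin : HasDerivWithinAt (fun θ => a - θ) (-1) (Icc a b) x :=
    ((hasDerivAt_id x).const_sub a).hasDerivWithinAt
  exact ((hlin.mul (hf' x hx)).add (hf x hx)).congr_deriv (by ring)

theorem integral_sub_sq_mul_eq_taylor_two (hab : a ≤ b)
    (hf : ∀ x ∈ Icc a b, HasDerivWithinAt f (f' x) (Icc a b) x)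
    (hf' : ∀ x ∈ Icc a b, HasDerivWithinAt f' (f'' x) (Icc a b) x)
    (hf'' : ∀ x ∈ Icc a b, HasDerivWithinAt f'' (f''' x) (Icc a b) x)
    (hf''' : IntervalIntegrable f''' volume a b) :
    ∫ θ in a..b, (1/2) * (a - θ) ^ 2 * f''' θ
      = (1/2) * (a - b) ^ 2 * f'' b + (a - b) * f' b + f b - f a := by
  have hint : IntervalIntegrable (fun θ => (1/2) * (a - θ) ^ 2 * f''' θ) volume a b :=
    hf'''.continuousOn_mul (by fun_prop)
  rw [integral_eq_sub_of_hasDerivWithinAt_Icc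
    (F := fun θ => (1/2) * (a - θ) ^ 2 * f'' θ + (a - θ) * f' θ + f θ) hab _ hint]
  · ring
  intro x hx
  have hlin : HasDerivWithinAt (fun θ => a - θ) (-1) (Icc a b) x :=
    ((hasDerivAt_id x).const_sub a).hasDerivWithinAt
  exact ((((hlin.pow 2).const_mul (1/2)).mul (hf'' x hx)).add (hlin.mul (hf' x hx))).add
    (hf x hx) |>.congr_deriv (by simp only [Pi.pow_apply]; ring)

end Taylor

theorem KdV_reconstruction (u u' u'' u''' : ℝ → ℝ)
    (hu' : ∀ x ∈ Set.Icc (0:ℝ) 1, HasDerivWithinAt u (u' x) (Set.Icc 0 1) x)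
    (hu'' : ∀ x ∈ Set.Icc (0:ℝ) 1, HasDerivWithinAt u' (u'' x) (Set.Icc 0 1) x)
    (hu''' : ∀ x ∈ Set.Icc (0:ℝ) 1, HasDerivWithinAt u'' (u''' x) (Set.Icc 0 1) x)
    (hcont : ContinuousOn u''' (Set.Icc 0 1))
    (h0 : u 0 = 0) (h1 : u 1 = 0) (h1' : u' 1 = 0) :
    ∀ s ∈ Set.Icc (0:ℝ) 1,
      ((∫ θ in (0:ℝ)..1, (1/2) * (s - 1) ^ 2 * θ ^ 2 * u''' θ)
          - (∫ θ in s..(1:ℝ), (1/2) * (s - θ) ^ 2 * u''' θ) = u s)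
      ∧ ((∫ θ in (0:ℝ)..1, (s - 1) * θ ^ 2 * u''' θ)
          - (∫ θ in s..(1:ℝ), (s - θ) * u''' θ) = u' s) := by
  intro s ⟨hs0, hs1⟩
  have hsub : Icc s 1 ⊆ Icc (0:ℝ) 1 := Icc_subset_Icc_left hs0
  have hint : IntervalIntegrable u''' volume s 1 :=
    (hcont.mono hsub).intervalIntegrable_of_Icc hs1
  have hmoment : ∫ θ in (0:ℝ)..1, θ ^ 2 * u''' θ = u'' 1 :=
    calc ∫ θ in (0:ℝ)..1, θ ^ 2 * u''' θ
        = 2 * ∫ θ in (0:ℝ)..1, (1/2) * (0 - θ) ^ 2 * u''' θ := by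
          rw [← intervalIntegral.integral_const_mul]; congr 1; ext θ; ring
      _ = u'' 1 := by
          rw [integral_sub_sq_mul_eq_taylor_two zero_le_one hu' hu'' hu'''
            (hcont.intervalIntegrable_of_Icc zero_le_one), h0, h1, h1']
          ring
  have restrict {g g' : ℝ → ℝ}
      (hg : ∀ x ∈ Icc (0:ℝ) 1, HasDerivWithinAt g (g' x) (Icc 0 1) x) :
      ∀ x ∈ Icc s 1, HasDerivWithinAt g (g' x) (Icc s 1) x :=
    fun x hx => (hg x (hsub hx)).mono hsub
  constructor
  · rw [integral_sub_sq_mul_eq_taylor_two hs1 (restrict hu') (restrict hu'') (restrict hu''') hint]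
    simp_rw [mul_assoc _ (_ ^ 2) (u''' _)]
    rw [intervalIntegral.integral_const_mul, hmoment, h1, h1']
    ring
  · rw [integral_sub_mul_eq_taylor_one hs1 (restrict hu'') (restrict hu''') hint]
    simp_rw [mul_assoc _ (_ ^ 2) (u''' _)]
    rw [intervalIntegral.integral_const_mul, hmoment, h1']
    ring
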